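/- Generalized Crapo formula: for a pseudo-arithmetic matroid with integral multiplicities, M_A(x,y) = Σ_{(B,C)} x^{|I(B)∩C|} y^{|E(B)∩C|}, where the sum is over pairs of a basis B and a subset C ⊆ E(B)∪I(B), each pair counted with multiplicity ρ((B∪C)∖I(B), (B∖C)∪E(B)). -/

import Mathlib

open scoped Classical

/-- `[R, R ∪ F ∪ T]` is a molecule for the rank function `rk`. -/
def IsMoleculeWith {α : Type*} [DecidableEq α] (rk : Finset α → ℕ)
    (R F T : Finset α) : Prop :=
  Disjoint R F ∧ Disjoint R T ∧ Disjoint F T ∧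
  ∀ A : Finset α, R ⊆ A → A ⊆ R ∪ F ∪ T → rk A = rk R + (A ∩ F).card

/-- `ρ(R,S)` for the molecule `[R,S]` with dependent part `T` (integral multiplicities). -/
def rho {α : Type*} [DecidableEq α] (m : Finset α → ℤ) (T R S : Finset α) : ℤ :=
  (-1) ^ T.card * ∑ A ∈ Finset.Icc R S, (-1) ^ (S.card - A.card) * m A

/-- `B` is a basis of the matroid with rank function `rk`. -/
def IsBasis {α : Type*} [Fintype α] [DecidableEq α] (rk : Finset α → ℕ)
    (B : Finset α) : Prop :=
  rk B = B.card ∧ rk B = rk Finset.univ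

/-- Externally active elements of the basis `B`. -/
def extAct {α : Type*} [Fintype α] [LinearOrder α] (rk : Finset α → ℕ)
    (B : Finset α) : Finset α :=
  (Finset.univ \ B).filter
    (fun e => rk (insert e (B.filter (fun b => e < b))) = rk (B.filter (fun b => e < b)))

-- Internally active elements of the basis `B`.
open scoped Classical in
noncomputable def intAct {α : Type*} [Fintype α] [LinearOrder α] (rk : Finset α → ℕ)
    (B : Finset α) : Finset α :=
  B.filter (fun e => ∀ f : α, f < e → ¬ IsBasis rk (insert f (B.erase e)))

/-
Expanding `ρ`, the right-hand side becomes a signed sum of `m A` over triples `(B, C, A)` with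
`A` in the interval `[(B ∪ C) \ I(B), (B \ C) ∪ E(B)]`. For a fixed basis `B`, summing over `C`
first collapses, by the binomial theorem, to `∑ m A (x-1)^|B \ A| (y-1)^|A \ B|` over
`A ∈ [B \ I(B), B ∪ E(B)]`. By Crapo, these intervals partition the subsets of the ground set:
the basis whose interval contains `A` is found greedily. On that interval `rk A = |B ∩ A|`, so
the exponents are those of the arithmetic Tutte polynomial.
-/

open Finset

section BooleanLattice

theorem prod_sub_one_eq_sum_powerset {ι R : Type*} [DecidableEq ι] [CommRing R]
    (w : ι → R) (D : Finset ι) :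
    ∏ i ∈ D, (w i - 1) = ∑ C ∈ D.powerset, (-1) ^ (#D - #C) * ∏ i ∈ C, w i := by
  simp_rw [sub_eq_add_neg, prod_add, prod_const]
  refine sum_congr rfl fun C hC => ?_
  rw [card_sdiff_of_subset (mem_powerset.1 hC), mul_comm]

theorem neg_one_pow_eq_neg_one_pow {R : Type*} [Ring R] {a b : ℕ}
    (h : a % 2 = b % 2) : (-1 : R) ^ a = (-1) ^ b := by
  rw [neg_one_pow_eq_pow_mod_two, h, ← neg_one_pow_eq_pow_mod_two]

variable {α : Type*} [DecidableEq α] {B I E : Finset α}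

theorem mem_Icc_and_mem_powerset_iff (hI : I ⊆ B) (hE : Disjoint B E) (A C : Finset α) :
    C ∈ (E ∪ I).powerset ∧ A ∈ Icc ((B ∪ C) \ I) ((B \ C) ∪ E) ↔
      C ∈ ((B \ A) ∪ (A \ B)).powerset ∧ A ∈ Icc (B \ I) (B ∪ E) := by
  rw [disjoint_left] at hE
  simp only [mem_powerset, mem_Icc, subset_iff, mem_union, mem_sdiff] at hI ⊢
  grind

theorem card_sdiff_add_card_sub_card_mod_two (hI : I ⊆ B) (hE : Disjoint B E) {A C : Finset α}
    (hC : C ⊆ E ∪ I) (hAS : A ⊆ (B \ C) ∪ E) (hCD : C ⊆ (B \ A) ∪ (A \ B)) :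
    (#(E \ C) + (#((B \ C) ∪ E) - #A)) % 2 = (#((B \ A) ∪ (A \ B)) - #C) % 2 := by
  have hS : #((B \ C) ∪ E) = #(B \ C) + #E :=
    card_union_of_disjoint (disjoint_of_subset_left sdiff_subset hE)
  have hD : #((B \ A) ∪ (A \ B)) = #(B \ A) + #(A \ B) :=
    card_union_of_disjoint disjoint_sdiff_sdiff
  have hCsplit : #(E ∩ C) + #(B ∩ C) = #C := by
    rw [← card_union_of_disjoint ((hE.symm.mono inter_subset_left inter_subset_left)),
      ← union_inter_distrib_right, inter_eq_right.2 (hC.trans (union_subset_union_right hI))]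
  have := card_sdiff_add_card_inter E C
  have := card_sdiff_add_card_inter B C
  have := card_sdiff_add_card_inter B A
  have := card_sdiff_add_card_inter A B
  have := card_le_card hAS
  have := card_le_card hCD
  rw [inter_comm A B] at *
  omega

theorem sum_powerset_signed_sum_Icc {R : Type*} [CommRing R] (hI : I ⊆ B) (hE : Disjoint B E)
    (f : Finset α → R) (x y : R) :
    ∑ C ∈ (E ∪ I).powerset,
      (-1) ^ #(E \ C) * (∑ A ∈ Icc ((B ∪ C) \ I) ((B \ C) ∪ E),
        (-1) ^ (#((B \ C) ∪ E) - #A) * f A) * x ^ #(I ∩ C) * y ^ #(E ∩ C) =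
      ∑ A ∈ Icc (B \ I) (B ∪ E), f A * (x - 1) ^ #(B \ A) * (y - 1) ^ #(A \ B) := by
  -- Both sides expand `∏ (w i - 1)` over the symmetric difference of `A` and `B`.
  set w : α → R := fun i => if i ∈ I then x else y
  have hw : ∀ A ∈ Icc (B \ I) (B ∪ E),
      (x - 1) ^ #(B \ A) * (y - 1) ^ #(A \ B) = ∏ i ∈ (B \ A) ∪ (A \ B), (w i - 1) := by
    intro A hA
    have hx : ∀ i ∈ B \ A, w i - 1 = x - 1 := fun i hi => by
      have : i ∈ I := by_contra fun h => (mem_sdiff.1 hi).2 ((mem_Icc.1 hA).1 (by simp_all))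
      simp [w, this]
    have hy : ∀ i ∈ A \ B, w i - 1 = y - 1 := fun i hi => by
      have : i ∉ I := fun h => (mem_sdiff.1 hi).2 (hI h)
      simp [w, this]
    rw [prod_union disjoint_sdiff_sdiff, prod_congr rfl hx, prod_congr rfl hy, prod_const,
      prod_const]
  have hwC : ∀ C ⊆ E ∪ I, ∏ i ∈ C, w i = x ^ #(I ∩ C) * y ^ #(E ∩ C) := by
    intro C hC
    rw [prod_ite, prod_const, prod_const, filter_mem_eq_inter, filter_notMem_eq_sdiff,
      inter_comm C I]
    congr 3
    ext t
    have := disjoint_left.1 hE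
    grind
  calc _ = ∑ C ∈ (E ∪ I).powerset, ∑ A ∈ Icc ((B ∪ C) \ I) ((B \ C) ∪ E),
        f A * ((-1) ^ (#((B \ A) ∪ (A \ B)) - #C) * ∏ i ∈ C, w i) := by
        refine sum_congr rfl fun C hC => ?_
        rw [mul_sum, sum_mul, sum_mul]
        refine sum_congr rfl fun A hA => ?_
        have hCD := ((mem_Icc_and_mem_powerset_iff hI hE A C).1 ⟨hC, hA⟩).1
        rw [mem_powerset] at hC hCD
        rw [hwC C hC, ← neg_one_pow_eq_neg_one_pow
          (card_sdiff_add_card_sub_card_mod_two hI hE hC (mem_Icc.1 hA).2 hCD), pow_add]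
        ring
    _ = ∑ A ∈ Icc (B \ I) (B ∪ E), ∑ C ∈ ((B \ A) ∪ (A \ B)).powerset,
        f A * ((-1) ^ (#((B \ A) ∪ (A \ B)) - #C) * ∏ i ∈ C, w i) :=
        sum_comm' fun C A => mem_Icc_and_mem_powerset_iff hI hE A C
    _ = _ := by
        refine sum_congr rfl fun A hA => ?_
        rw [← mul_sum, ← prod_sub_one_eq_sum_powerset, ← hw A hA, mul_assoc]

end BooleanLattice

structure IsMatroidRank {α : Type*} [DecidableEq α] (rk : Finset α → ℕ) : Prop where
  rk_empty : rk ∅ = 0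
  mono : ∀ A B : Finset α, A ⊆ B → rk A ≤ rk B
  submodular : ∀ A B : Finset α, rk (A ∪ B) + rk (A ∩ B) ≤ rk A + rk B
  rk_insert_le : ∀ (A : Finset α) (e : α), rk (insert e A) ≤ rk A + 1

def InClosure {α : Type*} [DecidableEq α] (rk : Finset α → ℕ) (e : α) (S : Finset α) :
    Prop :=
  rk (insert e S) = rk S

section Closure

variable {α : Type*} [DecidableEq α] {rk : Finset α → ℕ} {e : α} {S T : Finset α}

theorem inClosure_of_mem (h : e ∈ S) : InClosure rk e S := by
  rw [InClosure, insert_eq_self.2 h]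

namespace IsMatroidRank

variable (h : IsMatroidRank rk)
include h

theorem inClosure_mono (hST : S ⊆ T) (he : InClosure rk e S) : InClosure rk e T := by
  by_cases heT : e ∈ T
  · exact inClosure_of_mem heT
  have hsub := h.submodular (insert e S) T
  rw [insert_union, union_eq_right.2 hST, insert_inter_of_notMem heT,
    inter_eq_left.2 hST, he] at hsub
  exact le_antisymm (by omega) (h.mono _ _ (subset_insert _ _))

theorem rk_insert_of_not_inClosure (he : ¬ InClosure rk e S) :
    rk (insert e S) = rk S + 1 := by
  have := h.rk_insert_le S e
  have := h.mono S (insert e S) (subset_insert _ _)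
  unfold InClosure at he
  omega

theorem rk_union_le_add_card (S T : Finset α) : rk (S ∪ T) ≤ rk S + #T := by
  induction T using Finset.induction_on with
  | empty => simp
  | insert a T ha ih =>
    rw [union_insert, card_insert_of_notMem ha]
    linarith [h.rk_insert_le (S ∪ T) a]

theorem rk_le_card (S : Finset α) : rk S ≤ #S := by
  simpa [h.rk_empty] using h.rk_union_le_add_card ∅ S

theorem rk_eq_card_of_subset (hST : S ⊆ T) (hT : rk T = #T) : rk S = #S := by
  have := h.rk_union_le_add_card S (T \ S)
  rw [union_sdiff_of_subset hST, card_sdiff_of_subset hST] at this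
  have := card_le_card hST
  have := h.rk_le_card S
  omega

theorem not_inClosure_erase (hS : rk S = #S) (he : e ∈ S) : ¬ InClosure rk e (S.erase e) := by
  intro hcl
  have := h.rk_eq_card_of_subset (erase_subset e S) hS
  rw [InClosure, insert_erase he, hS, this, card_erase_of_mem he] at hcl
  have := card_pos.2 ⟨e, he⟩
  omega

theorem rk_union_eq_of_forall_inClosure (hS : ∀ s ∈ S, InClosure rk s T) :
    rk (S ∪ T) = rk T := by
  induction S using Finset.induction_on with
  | empty => simp
  | insert a S ha ih =>
    rw [insert_union, h.inClosure_mono subset_union_right (hS a (mem_insert_self a S)),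
      ih fun s hs => hS s (mem_insert_of_mem hs)]

theorem inClosure_trans (he : InClosure rk e S) (hS : ∀ s ∈ S, InClosure rk s T) :
    InClosure rk e T := by
  have h1 : InClosure rk e (S ∪ T) := h.inClosure_mono subset_union_left he
  have h2 : rk (S ∪ T) = rk T := h.rk_union_eq_of_forall_inClosure hS
  have h3 := h.mono (insert e T) (insert e (S ∪ T)) (insert_subset_insert _ subset_union_right)
  have h4 := h.mono T (insert e T) (subset_insert _ _)
  unfold InClosure at *
  omega

theorem inClosure_exchange {f : α} (hef : InClosure rk e (insert f S))
    (he : ¬ InClosure rk e S) : InClosure rk f (insert e S) := by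
  have h1 := h.rk_insert_of_not_inClosure he
  have h2 := h.rk_insert_le S f
  have h3 := h.mono (insert e S) (insert f (insert e S)) (subset_insert _ _)
  unfold InClosure at *
  rw [insert_comm] at h3 ⊢
  omega

end IsMatroidRank

theorem exists_minimal_inClosure (he : InClosure rk e S) :
    ∃ S₀ ⊆ S, InClosure rk e S₀ ∧ ∀ b ∈ S₀, ¬ InClosure rk e (S₀.erase b) := by
  obtain ⟨S₀, hS₀S, hmin⟩ := exists_minimal_le_of_wellFoundedLT (InClosure rk e) S he
  refine ⟨S₀, hS₀S, hmin.prop, fun b hb hcl => ?_⟩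
  exact notMem_erase b S₀ (hmin.le_of_le hcl (erase_subset b S₀) hb)

end Closure

section Ordered

variable {α : Type*} [LinearOrder α] {rk : Finset α → ℕ}

/- `greedyBasis rk A = greedyIn rk A ∪ greedyOut rk A` is built greedily: first the elements
of `A`, from the largest down, then the elements outside `A`, from the smallest up. -/

noncomputable def greedyIn (rk : Finset α → ℕ) (A : Finset α) : Finset α :=
  A.filter fun a => ¬ InClosure rk a (A.filter (a < ·))

theorem greedyIn_subset (A : Finset α) : greedyIn rk A ⊆ A := filter_subset _ _

namespace IsMatroidRank

variable (h : IsMatroidRank rk)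
include h

theorem rk_eq_card_of_forall_not_inClosure_gt {S : Finset α}
    (hS : ∀ s ∈ S, ¬ InClosure rk s (S.filter (s < ·))) : rk S = #S := by
  induction S using Finset.induction_on_min with
  | empty => exact h.rk_empty
  | insert a S haS ih =>
    have ha : a ∉ S := fun ha => lt_irrefl a (haS a ha)
    have hfilter_a : (insert a S).filter (a < ·) = S := by
      rw [filter_insert, if_neg (lt_irrefl a), filter_true_of_mem haS]
    have hfilter : ∀ t ∈ S, (insert a S).filter (t < ·) = S.filter (t < ·) := fun t ht => by
      rw [filter_insert, if_neg (haS t ht).not_gt]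
    have hS' := hS a (mem_insert_self a S)
    rw [hfilter_a] at hS'
    rw [h.rk_insert_of_not_inClosure hS', card_insert_of_notMem ha,
      ih fun t ht => hfilter t ht ▸ hS t (mem_insert_of_mem ht)]

theorem rk_union_eq_add_card_of_forall_not_inClosure_lt {S T : Finset α}
    (hT : ∀ t ∈ T, ¬ InClosure rk t (S ∪ T.filter (· < t))) : rk (S ∪ T) = rk S + #T := by
  induction T using Finset.induction_on_max with
  | empty => simp
  | insert a T haT ih =>
    have ha : a ∉ T := fun ha => lt_irrefl a (haT a ha)
    have hfilter_a : (insert a T).filter (· < a) = T := by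
      rw [filter_insert, if_neg (lt_irrefl a), filter_true_of_mem haT]
    have hfilter : ∀ t ∈ T, (insert a T).filter (· < t) = T.filter (· < t) := fun t ht => by
      rw [filter_insert, if_neg (haT t ht).not_gt]
    have hT' := hT a (mem_insert_self a T)
    rw [hfilter_a] at hT'
    rw [union_insert, h.rk_insert_of_not_inClosure hT', card_insert_of_notMem ha,
      ih fun t ht => hfilter t ht ▸ hT t (mem_insert_of_mem ht), add_assoc]

end IsMatroidRank

end Ordered

section Activities

variable {α : Type*} [Fintype α] [LinearOrder α] {rk : Finset α → ℕ} {B : Finset α}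
  {e : α}

theorem intAct_subset : intAct rk B ⊆ B := filter_subset _ _

theorem mem_extAct_iff : e ∈ extAct rk B ↔ e ∉ B ∧ InClosure rk e (B.filter (e < ·)) := by
  simp [extAct, InClosure]

theorem disjoint_extAct : Disjoint B (extAct rk B) :=
  disjoint_right.2 fun _ he => (mem_extAct_iff.1 he).1

theorem mem_extAct_of_mem_Icc {A : Finset α} (hA : A ∈ Icc (B \ intAct rk B) (B ∪ extAct rk B))
    (he : e ∈ A) (heB : e ∉ B) : e ∈ extAct rk B := by
  simpa [heB] using (mem_Icc.1 hA).2 he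

theorem mem_intAct_of_mem_Icc {A : Finset α} (hA : A ∈ Icc (B \ intAct rk B) (B ∪ extAct rk B))
    (he : e ∈ B) (heA : e ∉ A) : e ∈ intAct rk B :=
  by_contra fun heI => heA ((mem_Icc.1 hA).1 (mem_sdiff.2 ⟨he, heI⟩))

namespace IsMatroidRank

variable (h : IsMatroidRank rk)
include h

theorem isBasis_insert_erase_iff (hB : IsBasis rk B) (he : e ∈ B) {f : α} :
    IsBasis rk (insert f (B.erase e)) ↔ ¬ InClosure rk f (B.erase e) := by
  have hrk := h.rk_eq_card_of_subset (erase_subset e B) hB.1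
  have hcard := card_erase_add_one he
  have hrkB := hB.1.symm.trans hB.2
  constructor
  · intro hbasis hcl
    have := hbasis.2
    rw [hcl, hrk] at this
    omega
  · intro hcl
    have hf : f ∉ B.erase e := fun hf => hcl (inClosure_of_mem hf)
    have := h.rk_insert_of_not_inClosure hcl
    exact ⟨by rw [this, card_insert_of_notMem hf, hrk], by omega⟩

theorem mem_intAct_iff (hB : IsBasis rk B) (he : e ∈ B) :
    e ∈ intAct rk B ↔ ∀ f < e, InClosure rk f (B.erase e) := by
  simp [intAct, he, h.isBasis_insert_erase_iff hB he]

/-- Take a minimal spanning set: an internally active member `b` could be exchanged with `e`,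
which would put `b` in the closure of `B.erase b`. -/
theorem exists_inClosure_of_mem_extAct (hB : IsBasis rk B) (he : e ∈ extAct rk B) :
    ∃ S ⊆ B.filter (e < ·), InClosure rk e S ∧ Disjoint S (intAct rk B) := by
  obtain ⟨S, hSB, hS, hmin⟩ := exists_minimal_inClosure (mem_extAct_iff.1 he).2
  refine ⟨S, hSB, hS, disjoint_left.2 fun b hbS hbI => ?_⟩
  obtain ⟨hbB, heb⟩ := mem_filter.1 (hSB hbS)
  have hbe : InClosure rk b (insert e (S.erase b)) :=
    h.inClosure_exchange (by rwa [insert_erase hbS]) (hmin b hbS)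
  refine h.not_inClosure_erase hB.1 hbB (h.inClosure_trans hbe fun s hs => ?_)
  rcases mem_insert.1 hs with rfl | hs
  · exact (h.mem_intAct_iff hB hbB).1 hbI s heb
  · exact inClosure_of_mem (erase_subset_erase b (hSB.trans (filter_subset _ _)) hs)

theorem rk_eq_card_inter_of_mem_Icc (hB : IsBasis rk B)
    {A : Finset α} (hA : A ∈ Icc (B \ intAct rk B) (B ∪ extAct rk B)) : rk A = #(B ∩ A) := by
  have hspan : ∀ a ∈ A \ B, InClosure rk a (B ∩ A) := by
    intro a ha
    obtain ⟨S, hSB, hS, hSI⟩ := h.exists_inClosure_of_mem_extAct hB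
      (mem_extAct_of_mem_Icc hA (mem_sdiff.1 ha).1 (mem_sdiff.1 ha).2)
    refine h.inClosure_mono (fun s hs => ?_) hS
    have hsB := (mem_filter.1 (hSB hs)).1
    exact mem_inter.2 ⟨hsB, (mem_Icc.1 hA).1 (mem_sdiff.2 ⟨hsB, disjoint_left.1 hSI hs⟩)⟩
  rw [← h.rk_eq_card_of_subset inter_subset_left hB.1,
    ← h.rk_union_eq_of_forall_inClosure hspan,
    inter_comm B A, sdiff_union_inter]

end IsMatroidRank

end Activities

section Greedy

variable {α : Type*} [Fintype α] [LinearOrder α] {rk : Finset α → ℕ}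

noncomputable def greedyOut (rk : Finset α → ℕ) (A : Finset α) : Finset α :=
  (univ \ A).filter fun f => ¬ InClosure rk f (greedyIn rk A ∪ (univ \ A).filter (· < f))

noncomputable def greedyBasis (rk : Finset α → ℕ) (A : Finset α) : Finset α :=
  greedyIn rk A ∪ greedyOut rk A

theorem disjoint_greedyOut (A : Finset α) : Disjoint A (greedyOut rk A) :=
  disjoint_right.2 fun _ hf => (mem_sdiff.1 (mem_filter.1 hf).1).2

namespace IsMatroidRank

variable (h : IsMatroidRank rk)
include h

theorem inClosure_greedyIn {A : Finset α} {a : α} (ha : a ∈ A) (haG : a ∉ greedyIn rk A) :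
    InClosure rk a ((greedyIn rk A).filter (a < ·)) := by
  induction a using WellFoundedGT.induction with
  | _ a ih =>
  have hcl : InClosure rk a (A.filter (a < ·)) := by
    by_contra hc
    exact haG (mem_filter.2 ⟨ha, hc⟩)
  refine h.inClosure_trans hcl fun b hb => ?_
  obtain ⟨hbA, hab⟩ := mem_filter.1 hb
  by_cases hbG : b ∈ greedyIn rk A
  · exact inClosure_of_mem (mem_filter.2 ⟨hbG, hab⟩)
  · exact h.inClosure_mono (monotone_filter_right _ fun _ _ => hab.trans) (ih b hab hbA hbG)

theorem inClosure_greedyOut {A : Finset α} {g : α} (hg : g ∉ A) :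
    InClosure rk g (greedyIn rk A ∪ (greedyOut rk A).filter (· ≤ g)) := by
  induction g using WellFoundedLT.induction with
  | _ g ih =>
  by_cases hgG : g ∈ greedyOut rk A
  · exact inClosure_of_mem (mem_union_right _ (mem_filter.2 ⟨hgG, le_rfl⟩))
  have hcl : InClosure rk g (greedyIn rk A ∪ (univ \ A).filter (· < g)) := by
    by_contra hc
    exact hgG (mem_filter.2 ⟨mem_sdiff.2 ⟨mem_univ g, hg⟩, hc⟩)
  refine h.inClosure_trans hcl fun b hb => ?_
  rcases mem_union.1 hb with hb | hb
  · exact inClosure_of_mem (mem_union_left _ hb)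
  · obtain ⟨hbA, hbg⟩ := mem_filter.1 hb
    refine h.inClosure_mono (union_subset_union_right ?_) (ih b hbg (mem_sdiff.1 hbA).2)
    exact monotone_filter_right _ fun _ _ hcb => hcb.trans hbg.le

theorem inClosure_greedy (A : Finset α) (g : α) :
    InClosure rk g (greedyIn rk A ∪ (greedyOut rk A).filter (· ≤ g)) := by
  by_cases hgA : g ∈ A
  · by_cases hgG : g ∈ greedyIn rk A
    · exact inClosure_of_mem (mem_union_left _ hgG)
    · exact h.inClosure_mono (filter_subset _ _ |>.trans subset_union_left)
        (h.inClosure_greedyIn hgA hgG)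
  · exact h.inClosure_greedyOut hgA

theorem isBasis_greedyBasis (A : Finset α) : IsBasis rk (greedyBasis rk A) := by
  have hIn : rk (greedyIn rk A) = #(greedyIn rk A) :=
    h.rk_eq_card_of_forall_not_inClosure_gt fun s hs hcl => (mem_filter.1 hs).2
      (h.inClosure_mono (filter_subset_filter _ (greedyIn_subset A)) hcl)
  have hOut : rk (greedyBasis rk A) = rk (greedyIn rk A) + #(greedyOut rk A) :=
    h.rk_union_eq_add_card_of_forall_not_inClosure_lt fun t ht hcl => (mem_filter.1 ht).2
      (h.inClosure_mono (union_subset_union_right (filter_subset_filter _ (filter_subset _ _))) hcl)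
  have hcard : #(greedyBasis rk A) = #(greedyIn rk A) + #(greedyOut rk A) :=
    card_union_of_disjoint ((disjoint_greedyOut A).mono_left (greedyIn_subset A))
  have hspan : rk (univ ∪ greedyBasis rk A) = rk (greedyBasis rk A) :=
    h.rk_union_eq_of_forall_inClosure fun g _ => h.inClosure_mono
      (union_subset_union_right (filter_subset _ _)) (h.inClosure_greedy A g)
  rw [union_eq_left.2 (subset_univ _)] at hspan
  exact ⟨by omega, hspan.symm⟩

theorem mem_Icc_greedyBasis (A : Finset α) :
    A ∈ Icc (greedyBasis rk A \ intAct rk (greedyBasis rk A))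
      (greedyBasis rk A ∪ extAct rk (greedyBasis rk A)) := by
  set G := greedyBasis rk A
  have hG := h.isBasis_greedyBasis A
  refine mem_Icc.2 ⟨fun f hf => ?_, fun a ha => ?_⟩
  · obtain ⟨hfG, hfI⟩ := mem_sdiff.1 hf
    by_contra hfA
    have hfIn : f ∉ greedyIn rk A := fun hf => hfA (greedyIn_subset A hf)
    refine hfI ((h.mem_intAct_iff hG hfG).2 fun g hgf =>
      h.inClosure_mono ?_ (h.inClosure_greedy A g))
    refine union_subset (fun b hb => mem_erase.2 ⟨?_, mem_union_left _ hb⟩) fun b hb => ?_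
    · rintro rfl; exact hfIn hb
    · obtain ⟨hbOut, hbg⟩ := mem_filter.1 hb
      exact mem_erase.2 ⟨(hbg.trans_lt hgf).ne, mem_union_right _ hbOut⟩
  · by_cases haG : a ∈ G
    · exact mem_union_left _ haG
    have haIn : a ∉ greedyIn rk A := fun ha => haG (mem_union_left _ ha)
    refine mem_union_right _ (mem_extAct_iff.2 ⟨haG, ?_⟩)
    exact h.inClosure_mono (filter_subset_filter _ subset_union_left) (h.inClosure_greedyIn ha haIn)

theorem greedyIn_eq_inter_of_mem_Icc {B A : Finset α} (hB : IsBasis rk B)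
    (hA : A ∈ Icc (B \ intAct rk B) (B ∪ extAct rk B)) : greedyIn rk A = B ∩ A := by
  ext a
  refine ⟨fun ha => ?_, fun ha => ?_⟩
  · obtain ⟨haA, hacl⟩ := mem_filter.1 ha
    refine mem_inter.2 ⟨by_contra fun haB => ?_, haA⟩
    obtain ⟨S, hSB, hS, hSI⟩ :=
      h.exists_inClosure_of_mem_extAct hB (mem_extAct_of_mem_Icc hA haA haB)
    refine hacl (h.inClosure_mono (fun s hs => ?_) hS)
    obtain ⟨hsB, has⟩ := mem_filter.1 (hSB hs)
    refine mem_filter.2 ⟨by_contra fun hsA => ?_, has⟩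
    exact disjoint_left.1 hSI hs (mem_intAct_of_mem_Icc hA hsB hsA)
  · obtain ⟨haB, haA⟩ := mem_inter.1 ha
    refine mem_filter.2 ⟨haA, fun hcl => h.not_inClosure_erase hB.1 haB
      (h.inClosure_trans hcl fun x hx => ?_)⟩
    obtain ⟨hxA, hax⟩ := mem_filter.1 hx
    by_cases hxB : x ∈ B
    · exact inClosure_of_mem (mem_erase.2 ⟨hax.ne', hxB⟩)
    · refine h.inClosure_mono (fun b hb => ?_)
        (mem_extAct_iff.1 (mem_extAct_of_mem_Icc hA hxA hxB)).2
      obtain ⟨hbB, hxb⟩ := mem_filter.1 hb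
      exact mem_erase.2 ⟨(hax.trans hxb).ne', hbB⟩

theorem sdiff_subset_greedyOut_of_mem_Icc {B A : Finset α} (hB : IsBasis rk B)
    (hA : A ∈ Icc (B \ intAct rk B) (B ∪ extAct rk B)) : B \ A ⊆ greedyOut rk A := by
  intro f hf
  obtain ⟨hfB, hfA⟩ := mem_sdiff.1 hf
  refine mem_filter.2 ⟨mem_sdiff.2 ⟨mem_univ f, hfA⟩, fun hcl =>
    h.not_inClosure_erase hB.1 hfB (h.inClosure_trans hcl fun x hx => ?_)⟩
  rcases mem_union.1 hx with hx | hx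
  · rw [h.greedyIn_eq_inter_of_mem_Icc hB hA] at hx
    obtain ⟨hxB, hxA⟩ := mem_inter.1 hx
    exact inClosure_of_mem (mem_erase.2 ⟨fun hxf => hfA (hxf ▸ hxA), hxB⟩)
  · exact (h.mem_intAct_iff hB hfB).1 (mem_intAct_of_mem_Icc hA hfB hfA) x (mem_filter.1 hx).2

theorem eq_greedyBasis_of_mem_Icc {B A : Finset α} (hB : IsBasis rk B)
    (hA : A ∈ Icc (B \ intAct rk B) (B ∪ extAct rk B)) : B = greedyBasis rk A := by
  have hIn := h.greedyIn_eq_inter_of_mem_Icc hB hA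
  have hG := h.isBasis_greedyBasis A
  have hcard : #(greedyIn rk A) + #(greedyOut rk A) = #B := by
    rw [← card_union_of_disjoint ((disjoint_greedyOut A).mono_left (greedyIn_subset A)),
      ← greedyBasis, ← hG.1, hG.2, ← hB.2, hB.1]
  have hOut : B \ A = greedyOut rk A := by
    refine eq_of_subset_of_card_le (h.sdiff_subset_greedyOut_of_mem_Icc hB hA) ?_
    have := card_inter_add_card_sdiff B A
    rw [← hIn] at this
    omega
  rw [greedyBasis, hIn, ← hOut, union_comm, sdiff_union_inter]

theorem isBasis_and_mem_Icc_iff {B A : Finset α} :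
    IsBasis rk B ∧ A ∈ Icc (B \ intAct rk B) (B ∪ extAct rk B) ↔ B = greedyBasis rk A := by
  refine ⟨fun ⟨hB, hA⟩ => h.eq_greedyBasis_of_mem_Icc hB hA, ?_⟩
  rintro rfl
  exact ⟨h.isBasis_greedyBasis A, h.mem_Icc_greedyBasis A⟩

/-- The intervals `[B \ I(B), B ∪ E(B)]` of the bases partition the Boolean lattice. -/
theorem sum_isBasis_sum_Icc {M : Type*} [AddCommMonoid M] (F : Finset α → Finset α → M)
    (g : Finset α → M)
    (hF : ∀ B A, IsBasis rk B → A ∈ Icc (B \ intAct rk B) (B ∪ extAct rk B) →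
      F B A = g A) :
    ∑ B ∈ univ.filter (fun B => IsBasis rk B),
      ∑ A ∈ Icc (B \ intAct rk B) (B ∪ extAct rk B), F B A = ∑ A, g A := by
  rw [sum_comm' (t' := univ) (s' := fun A => {greedyBasis rk A}) fun B A => by
    simpa only [mem_filter, mem_univ, true_and, mem_singleton, and_true] using
      h.isBasis_and_mem_Icc_iff]
  refine sum_congr rfl fun A _ => ?_
  rw [sum_singleton, hF _ _ (h.isBasis_greedyBasis A) (h.mem_Icc_greedyBasis A)]

end IsMatroidRank

end Greedy

theorem generalized_crapo_general {α : Type*} [Fintype α] [LinearOrder α]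
    (rk : Finset α → ℕ) (m : Finset α → ℤ)
    (hR0 : rk ∅ = 0)
    (hR1 : ∀ A B : Finset α, A ⊆ B → rk A ≤ rk B)
    (hR2 : ∀ A B : Finset α, rk (A ∪ B) + rk (A ∩ B) ≤ rk A + rk B)
    (hR3 : ∀ (A : Finset α) (e : α), rk (insert e A) ≤ rk A + 1)
    (x y : ℝ) :
    ∑ A : Finset α, (m A : ℝ) * (x - 1) ^ (rk Finset.univ - rk A) *
        (y - 1) ^ (A.card - rk A) =
      ∑ B ∈ Finset.univ.filter (fun B : Finset α => IsBasis rk B),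
        ∑ C ∈ (extAct rk B ∪ intAct rk B).powerset,
          (rho m (extAct rk B \ C) ((B ∪ C) \ intAct rk B) ((B \ C) ∪ extAct rk B) : ℝ) *
            x ^ (intAct rk B ∩ C).card * y ^ (extAct rk B ∩ C).card := by
  have h : IsMatroidRank rk := ⟨hR0, hR1, hR2, hR3⟩
  symm
  calc _ = ∑ B ∈ univ.filter (fun B => IsBasis rk B),
        ∑ A ∈ Icc (B \ intAct rk B) (B ∪ extAct rk B),
          (m A : ℝ) * (x - 1) ^ #(B \ A) * (y - 1) ^ #(A \ B) := by
        refine sum_congr rfl fun B _ => ?_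
        rw [← sum_powerset_signed_sum_Icc intAct_subset disjoint_extAct]
        refine sum_congr rfl fun C _ => ?_
        simp [rho]
    _ = _ := h.sum_isBasis_sum_Icc _ _ fun B A hB hA => by
        have hrk := h.rk_eq_card_inter_of_mem_Icc hB hA
        have hB' := card_inter_add_card_sdiff B A
        have hA' := card_inter_add_card_sdiff A B
        rw [inter_comm A B] at hA'
        rw [← hB.2, hB.1, hrk, show #B - #(B ∩ A) = #(B \ A) by omega,
          show #A - #(B ∩ A) = #(A \ B) by omega]

/-- generalized Crapo formula: for a pseudo-arithmetic matroid with
integral multiplicities,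
`M(x,y) = Σ_{(B,C)} ρ((B∪C)∖I(B), (B∖C)∪E(B)) x^{|I(B)∩C|} y^{|E(B)∩C|}`,
the sum being over bases `B` and subsets `C ⊆ E(B) ∪ I(B)`. -/
theorem generalized_crapo {α : Type*} [Fintype α] [LinearOrder α]
    (rk : Finset α → ℕ) (m : Finset α → ℤ)
    (hR0 : rk ∅ = 0)
    (hR1 : ∀ A B : Finset α, A ⊆ B → rk A ≤ rk B)
    (hR2 : ∀ A B : Finset α, rk (A ∪ B) + rk (A ∩ B) ≤ rk A + rk B)
    (hR3 : ∀ (A : Finset α) (e : α), rk (insert e A) ≤ rk A + 1)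
    (hP : ∀ R F T : Finset α, IsMoleculeWith rk R F T → 0 ≤ rho m T R (R ∪ F ∪ T))
    (x y : ℝ) :
    ∑ A : Finset α, (m A : ℝ) * (x - 1) ^ (rk Finset.univ - rk A) *
        (y - 1) ^ (A.card - rk A) =
      ∑ B ∈ Finset.univ.filter (fun B : Finset α => IsBasis rk B),
        ∑ C ∈ (extAct rk B ∪ intAct rk B).powerset,
          (rho m (extAct rk B \ C) ((B ∪ C) \ intAct rk B) ((B \ C) ∪ extAct rk B) : ℝ) *
            x ^ (intAct rk B ∩ C).card * y ^ (extAct rk B ∩ C).card :=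
  generalized_crapo_general rk m hR0 hR1 hR2 hR3 x y
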